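/- arXiv:1503.05075 — 6 statements merged into one kernel-verified Lean document; each statement's English description precedes it below -/
import Mathlib

section
/- Let S be a pomonoid and A_S an S-poset. For a subset H ⊆ A×A, define a relation σ on A by: a σ b iff a = b, or there exist s₁,…,sₙ, t₁,…,tₘ ∈ S and pairs (cᵢ,dᵢ), (pⱼ,qⱼ) ∈ H such that a ≤ c₁s₁, d₁s₁ ≤ c₂s₂, …, dₙsₙ ≤ b and b ≤ p₁t₁, q₁t₁ ≤ p₂t₂, …, qₘtₘ ≤ a. Then σ is an equivalence relation on A that is compatible with the S-action. -/
/-- A one-way chain of inequalities through pairs of `H`: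
`a ≤ c₁s₁, d₁s₁ ≤ c₂s₂, …, dₙsₙ ≤ b` with every `(cᵢ, dᵢ) ∈ H`. -/
def ChainLe {S A : Type} [PartialOrder A] (act : A → S → A) (H : Set (A × A))
    (a b : A) : Prop :=
  ∃ n : ℕ, ∃ c d : Fin (n + 1) → A, ∃ s : Fin (n + 1) → S,
    (∀ i, (c i, d i) ∈ H) ∧
    a ≤ act (c 0) (s 0) ∧
    (∀ i : Fin n, act (d i.castSucc) (s i.castSucc) ≤ act (c i.succ) (s i.succ)) ∧
    act (d (Fin.last n)) (s (Fin.last n)) ≤ b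

def SigmaRel {S A : Type} [PartialOrder A] (act : A → S → A) (H : Set (A × A))
    (a b : A) : Prop :=
  a = b ∨ (ChainLe act H a b ∧ ChainLe act H b a)

/-! Chains through `H` are exactly finite sequences of single links `a ≤ c t`, `d t ≤ b`, so they
compose and `ChainLe` is transitive; hence `σ`, equality or mutual chain-reachability, is an
equivalence. Replacing every scalar `sᵢ` of a chain from `a` to `b` by `sᵢ u` gives, by
monotonicity of the action, a chain from `a u` to `b u`. -/

theorem equivalence_eq_or_and_swap {α : Type*} {r : α → α → Prop}
    (hr : ∀ ⦃a b c⦄, r a b → r b c → r a c) :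
    Equivalence fun a b => a = b ∨ (r a b ∧ r b a) where
  refl _ := .inl rfl
  symm
    | .inl hab => .inl hab.symm
    | .inr ⟨hab, hba⟩ => .inr ⟨hba, hab⟩
  trans
    | .inl rfl, hbc => hbc
    | .inr hab, .inl rfl => .inr hab
    | .inr ⟨hab, hba⟩, .inr ⟨hbc, hcb⟩ => .inr ⟨hr hab hbc, hr hcb hba⟩

namespace ChainLe

variable {S A : Type} [PartialOrder A] {act : A → S → A} {H : Set (A × A)}

def Link (act : A → S → A) (H : Set (A × A)) (a b : A) : Prop :=
  ∃ c d : A, ∃ t : S, (c, d) ∈ H ∧ a ≤ act c t ∧ act d t ≤ b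

theorem transGen_link {a b : A} (h : ChainLe act H a b) :
    Relation.TransGen (Link act H) a b := by
  obtain ⟨n, c, d, s, hH, hfirst, hmid, hlast⟩ := h
  induction n generalizing a with
  | zero => exact .single ⟨c 0, d 0, s 0, hH 0, hfirst, hlast⟩
  | succ n ih =>
    refine .head ⟨c 0, d 0, s 0, hH 0, hfirst, le_rfl⟩ <|
      ih (fun i => c i.succ) (fun i => d i.succ) (fun i => s i.succ) (fun i => hH i.succ)
        (hmid 0) (fun i => ?_) ?_
    · simpa only [Fin.succ_castSucc] using hmid i.succ
    · simpa only [Fin.succ_last] using hlast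

theorem of_link {a b : A} (h : Link act H a b) : ChainLe act H a b :=
  let ⟨c, d, t, hcd, hac, hdb⟩ := h
  ⟨0, fun _ => c, fun _ => d, fun _ => t, fun _ => hcd, hac, Fin.elim0, hdb⟩

theorem link_cons {a b e : A} (hab : Link act H a b) (hbe : ChainLe act H b e) :
    ChainLe act H a e := by
  obtain ⟨c₀, d₀, t₀, hcd₀, hac₀, hdb₀⟩ := hab
  obtain ⟨n, c, d, s, hH, hfirst, hmid, hlast⟩ := hbe
  refine ⟨n + 1, Fin.cons c₀ c, Fin.cons d₀ d, Fin.cons t₀ s,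
    Fin.cases hcd₀ hH, hac₀, Fin.cases (hdb₀.trans hfirst) fun i => by
      simpa only [← Fin.succ_castSucc, Fin.cons_succ] using hmid i, ?_⟩
  simpa only [← Fin.succ_last, Fin.cons_succ] using hlast

theorem iff_transGen_link {a b : A} :
    ChainLe act H a b ↔ Relation.TransGen (Link act H) a b := by
  refine ⟨transGen_link, fun h => ?_⟩
  induction h using Relation.TransGen.head_induction_on with
  | single h => exact of_link h
  | head hstep _ ih => exact link_cons hstep ih

theorem trans {a b e : A} (hab : ChainLe act H a b) (hbe : ChainLe act H b e) :
    ChainLe act H a e :=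
  iff_transGen_link.2 <| (iff_transGen_link.1 hab).trans (iff_transGen_link.1 hbe)

theorem act_right [Monoid S] (act_mul : ∀ (a : A) (s t : S), act (act a s) t = act a (s * t))
    (act_monoA : ∀ (s : S) {a b : A}, a ≤ b → act a s ≤ act b s)
    {a b : A} (u : S) (h : ChainLe act H a b) : ChainLe act H (act a u) (act b u) := by
  obtain ⟨n, c, d, s, hH, hfirst, hmid, hlast⟩ := h
  refine ⟨n, c, d, fun i => s i * u, hH, ?_, fun i => ?_, ?_⟩
  · rw [← act_mul]; exact act_monoA u hfirst
  · rw [← act_mul, ← act_mul]; exact act_monoA u (hmid i)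
  · rw [← act_mul]; exact act_monoA u hlast

end ChainLe

theorem sigmaRel_equivalence_and_compatible_general
    {S A : Type} [Monoid S] [PartialOrder A]
    (act : A → S → A)
    (act_mul : ∀ (a : A) (s t : S), act (act a s) t = act a (s * t))
    (act_monoA : ∀ (s : S) {a b : A}, a ≤ b → act a s ≤ act b s)
    (H : Set (A × A)) :
    Equivalence (SigmaRel act H) ∧
      ∀ (a b : A) (s : S), SigmaRel act H a b → SigmaRel act H (act a s) (act b s) := by
  refine ⟨equivalence_eq_or_and_swap fun _ _ _ => ChainLe.trans, ?_⟩
  rintro a b s (rfl | ⟨hab, hba⟩)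
  · exact .inl rfl
  · exact .inr ⟨hab.act_right act_mul act_monoA s, hba.act_right act_mul act_monoA s⟩

/-- `σ` is an equivalence relation on `A` compatible with the `S`-action. -/
theorem sigmaRel_equivalence_and_compatible
    {S A : Type} [Monoid S] [PartialOrder S] [PartialOrder A]
    [CovariantClass S S (· * ·) (· ≤ ·)]
    [CovariantClass S S (Function.swap (· * ·)) (· ≤ ·)]
    (act : A → S → A)
    (act_mul : ∀ (a : A) (s t : S), act (act a s) t = act a (s * t))
    (act_one : ∀ a : A, act a 1 = a)
    (act_monoA : ∀ (s : S) {a b : A}, a ≤ b → act a s ≤ act b s)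
    (act_monoS : ∀ (a : A) {s t : S}, s ≤ t → act a s ≤ act a t)
    (H : Set (A × A)) :
    Equivalence (SigmaRel act H) ∧
      ∀ (a b : A) (s : S), SigmaRel act H a b → SigmaRel act H (act a s) (act b s) :=
  sigmaRel_equivalence_and_compatible_general act act_mul act_monoA H
end

section
/- Let S be a pomonoid, A_S an S-poset, and σ a binary relation on A defined as the relation ν(H) from a subset H ⊆ A×A (i.e., a σ b iff a = b or a and b are connected by chains of inequalities through H-pairs in both directions). Then every closed σ-chain a ≤ a₁ σ a'₁ ≤ a₂ σ a'₂ ≤ ⋯ ≤ aₙ σ a'ₙ ≤ a is contained in a single σ-class; that is, a σ aₖ for every k. -/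
section aux
variable {S A : Type} [PartialOrder A] (act : A → S → A) (H : Set (A × A))

lemma chainLe_mono_left {a a' b : A} (h : a' ≤ a) (hc : ChainLe act H a b) :
    ChainLe act H a' b := by
  obtain ⟨n, c, d, s, hH, h0, hmid, hend⟩ := hc
  exact ⟨n, c, d, s, hH, le_trans h h0, hmid, hend⟩

lemma chainLe_mono_right {a b b' : A} (hc : ChainLe act H a b) (h : b ≤ b') :
    ChainLe act H a b' := by
  obtain ⟨n, c, d, s, hH, h0, hmid, hend⟩ := hc
  exact ⟨n, c, d, s, hH, h0, hmid, le_trans hend h⟩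

lemma chainLe_cons {a b c d : A} {s : S} (hcd : (c, d) ∈ H)
    (h0 : a ≤ act c s) (hc : ChainLe act H (act d s) b) :
    ChainLe act H a b := by
  obtain ⟨n, cs, ds, ss, hH, h0', hmid, hend⟩ := hc
  refine ⟨n + 1, Fin.cons c cs, Fin.cons d ds, Fin.cons s ss, ?_, ?_, ?_, ?_⟩
  · intro i
    refine Fin.cases ?_ ?_ i <;> simp [hcd, hH]
  · simpa using h0
  · intro i
    refine Fin.cases ?_ ?_ i
    · simpa using h0'
    · intro j
      simpa [← Fin.succ_castSucc] using hmid j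
  · simpa [← Fin.succ_last] using hend

lemma chainLe_trans {a b e : A} (h1 : ChainLe act H a b) (h2 : ChainLe act H b e) :
    ChainLe act H a e := by
  obtain ⟨n, c, d, s, hH, h0, hmid, hend⟩ := h1
  induction n generalizing a with
  | zero =>
    exact chainLe_cons act H (hH 0) h0
      (chainLe_mono_left act H hend h2)
  | succ m ih =>
    refine chainLe_cons act H (hH 0) h0 ?_
    refine ih (fun i => c i.succ) (fun i => d i.succ) (fun i => s i.succ)
      (fun i => hH i.succ) ?_ ?_ ?_
    · simpa using hmid 0
    · intro i
      simpa [← Fin.succ_castSucc] using hmid i.succ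
    · simpa [← Fin.succ_last] using hend
end aux

/-- every closed `σ`-chain
`a ≤ a₁ σ a'₁ ≤ a₂ σ a'₂ ≤ ⋯ ≤ aₙ σ a'ₙ ≤ a` is contained in a single
`σ`-class, i.e. `a σ aₖ` for every `k`. -/
theorem closed_sigmaChain_single_class
    {S A : Type} [Monoid S] [PartialOrder S] [PartialOrder A]
    [CovariantClass S S (· * ·) (· ≤ ·)]
    [CovariantClass S S (Function.swap (· * ·)) (· ≤ ·)]
    (act : A → S → A)
    (act_mul : ∀ (a : A) (s t : S), act (act a s) t = act a (s * t))
    (act_one : ∀ a : A, act a 1 = a)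
    (act_monoA : ∀ (s : S) {a b : A}, a ≤ b → act a s ≤ act b s)
    (act_monoS : ∀ (a : A) {s t : S}, s ≤ t → act a s ≤ act a t)
    (H : Set (A × A)) (a : A) (n : ℕ) (x x' : Fin (n + 1) → A)
    (h0 : a ≤ x 0)
    (hsig : ∀ i, SigmaRel act H (x i) (x' i))
    (hstep : ∀ i : Fin n, x' i.castSucc ≤ x i.succ)
    (hend : x' (Fin.last n) ≤ a) :
    ∀ k, SigmaRel act H a (x k) := by
  set T := ChainLe act H with hT
  by_cases hall : ∀ i, x i = x' i
  · -- all σ-steps are equalities ⇒ everything equal by antisymmetry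
    have up : ∀ k, a ≤ x k := by
      intro k
      induction k using Fin.induction with
      | zero => exact h0
      | succ i ih => exact le_trans ih (le_trans (le_of_eq (hall i.castSucc)) (hstep i))
    have down : ∀ k, x k ≤ a := by
      intro k
      induction k using Fin.reverseInduction with
      | last => exact le_trans (le_of_eq (hall (Fin.last n))) hend
      | cast i ih =>
        exact le_trans (le_of_eq (hall i.castSucc)) (le_trans (hstep i) ih)
    intro k
    exact Or.inl (le_antisymm (up k) (down k))
  · push_neg at hall
    obtain ⟨j, hj⟩ := hall
    obtain ⟨Tj, Tj'⟩ := (hsig j).resolve_left hj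
    -- composition helpers
    have lot_T : ∀ {u v w : A}, (u ≤ v ∨ T u v) → T v w → T u w := by
      rintro u v w (h | h) h2
      · exact chainLe_mono_left act H h h2
      · exact chainLe_trans act H h h2
    have T_lot : ∀ {u v w : A}, T u v → (v ≤ w ∨ T v w) → T u w := by
      rintro u v w h1 (h | h)
      · exact chainLe_mono_right act H h1 h
      · exact chainLe_trans act H h1 h
    have step_lot : ∀ i : Fin (n + 1), x i ≤ x' i ∨ T (x i) (x' i) := by
      intro i
      rcases hsig i with h | ⟨h, _⟩
      · exact Or.inl (le_of_eq h)
      · exact Or.inr h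
    have lot_trans : ∀ {u v w : A}, (u ≤ v ∨ T u v) → (v ≤ w ∨ T v w) →
        (u ≤ w ∨ T u w) := by
      rintro u v w (h1 | h1) (h2 | h2)
      · exact Or.inl (le_trans h1 h2)
      · exact Or.inr (chainLe_mono_left act H h1 h2)
      · exact Or.inr (chainLe_mono_right act H h1 h2)
      · exact Or.inr (chainLe_trans act H h1 h2)
    have lotA : ∀ k, a ≤ x k ∨ T a (x k) := by
      intro k
      induction k using Fin.induction with
      | zero => exact Or.inl h0
      | succ i ih =>
        refine lot_trans ih (lot_trans (step_lot i.castSucc) (Or.inl (hstep i)))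
    have lotB : ∀ k, x k ≤ a ∨ T (x k) a := by
      intro k
      induction k using Fin.reverseInduction with
      | last => exact lot_trans (step_lot (Fin.last n)) (Or.inl hend)
      | cast i ih =>
        exact lot_trans (step_lot i.castSucc) (lot_trans (Or.inl (hstep i)) ih)
    have Taa : T a a :=
      chainLe_trans act H (lot_T (lotA j) Tj) (T_lot Tj' (lotB j))
    intro k
    exact Or.inr ⟨T_lot Taa (lotA k), lot_T (lotB k) Taa⟩
end

section
/- Let S be a pomonoid and I a proper right ideal of S. Then the amalgamated coproduct A(I) = S ⊔_I S of two copies of S over I is a generator in the category Pos-S; equivalently, S is a retract of A(I): there exist S-poset morphisms q : S → A(I) and f : A(I) → S with f ∘ q = id_S. -/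
open scoped Classical

/-- The carrier of the amalgamated coproduct `A(I) = S ⊔_I S`: pairs `(w, u)`
with label `w ∈ {x, y, z} = Fin 3` (`2` playing the role of `z`), where the
label is `z` exactly when `u ∈ I`. -/
def AICarrier (S : Type) (I : Set S) : Type :=
  {p : Fin 3 × S // p.2 ∈ I ↔ p.1 = 2}

/-- The right `S`-action on `A(I)`. -/
noncomputable def AIact {S : Type} [Monoid S] (I : Set S)
    (hI : ∀ i ∈ I, ∀ s : S, i * s ∈ I)
    (p : AICarrier S I) (s : S) : AICarrier S I :=
  if h : p.1.2 * s ∈ I then ⟨(2, p.1.2 * s), by simp [h]⟩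
  else
    ⟨(p.1.1, p.1.2 * s), by
      constructor
      · intro hc; exact absurd hc h
      · intro hl; exact absurd (hI _ (p.2.mpr hl) s) h⟩

/-- The order on `A(I)`:
`(w₁,s) ≤ (w₂,t)` iff (`w₁ = w₂` and `s ≤ t`) or (`w₁ ≠ w₂` and `s ≤ i ≤ t` for some `i ∈ I`). -/
def AIle {S : Type} [PartialOrder S] (I : Set S) (p q : AICarrier S I) : Prop :=
  (p.1.1 = q.1.1 ∧ p.1.2 ≤ q.1.2) ∨
    (p.1.1 ≠ q.1.1 ∧ ∃ i ∈ I, p.1.2 ≤ i ∧ i ≤ q.1.2)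

variable {S : Type} (I : Set S)

/-! The projection `(w, u) ↦ u` forgetting the label is an `S`-poset morphism `A(I) → S`,
and the inclusion of the first copy of `S` is a section of it. -/

/-- The inclusion of the copy labelled `x`, encoded as `0`. -/
noncomputable def AIinl (s : S) : AICarrier S I :=
  if h : s ∈ I then ⟨(2, s), by simp [h]⟩ else ⟨(0, s), by simp [h]⟩

@[simp]
theorem AIinl_snd (s : S) : (AIinl I s).1.2 = s := by
  by_cases h : s ∈ I <;> simp [AIinl, h]

theorem AIinl_fst (s : S) : (AIinl I s).1.1 = if s ∈ I then 2 else 0 := by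
  by_cases h : s ∈ I <;> simp [AIinl, h]

section Monoid

variable [Monoid S] (hI : ∀ i ∈ I, ∀ s : S, i * s ∈ I)

@[simp]
theorem AIact_snd (p : AICarrier S I) (s : S) : (AIact I hI p s).1.2 = p.1.2 * s := by
  by_cases h : p.1.2 * s ∈ I <;> simp [AIact, h]

theorem AIact_fst (p : AICarrier S I) (s : S) :
    (AIact I hI p s).1.1 = if p.1.2 * s ∈ I then 2 else p.1.1 := by
  by_cases h : p.1.2 * s ∈ I <;> simp [AIact, h]

theorem AIinl_mul (s t : S) : AIinl I (s * t) = AIact I hI (AIinl I s) t := by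
  refine Subtype.ext (Prod.ext ?_ (by simp))
  rw [AIact_fst, AIinl_fst, AIinl_fst, AIinl_snd]
  by_cases hst : s * t ∈ I
  · simp [hst]
  · have hs : s ∉ I := fun hs ↦ hst (hI s hs t)
    simp [hs, hst]

end Monoid

section PartialOrder

variable [PartialOrder S]

theorem AIinl_monotone {s t : S} (hst : s ≤ t) : AIle I (AIinl I s) (AIinl I t) := by
  by_cases hs : s ∈ I <;> by_cases ht : t ∈ I
  · exact Or.inl ⟨by simp [AIinl_fst, hs, ht], by simpa⟩
  · exact Or.inr ⟨by simp [AIinl_fst, hs, ht], s, hs, by simpa⟩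
  · exact Or.inr ⟨by simp [AIinl_fst, hs, ht], t, ht, by simpa⟩
  · exact Or.inl ⟨by simp [AIinl_fst, hs, ht], by simpa⟩

theorem AIle.snd_le {p p' : AICarrier S I} (h : AIle I p p') : p.1.2 ≤ p'.1.2 := by
  rcases h with ⟨-, h⟩ | ⟨-, i, -, hpi, hip⟩
  · exact h
  · exact hpi.trans hip

end PartialOrder

theorem AI_is_generator_general
    {S : Type} [Monoid S] [PartialOrder S]
    (I : Set S)
    (hI : ∀ i ∈ I, ∀ s : S, i * s ∈ I) :
    ∃ (q : S → AICarrier S I) (f : AICarrier S I → S),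
      (∀ s t : S, s ≤ t → AIle I (q s) (q t)) ∧
      (∀ s t : S, q (s * t) = AIact I hI (q s) t) ∧
      (∀ p p' : AICarrier S I, AIle I p p' → f p ≤ f p') ∧
      (∀ (p : AICarrier S I) (t : S), f (AIact I hI p t) = f p * t) ∧
      (∀ s : S, f (q s) = s) :=
  ⟨AIinl I, fun p ↦ p.1.2, fun _ _ ↦ AIinl_monotone I, AIinl_mul I hI,
    fun _ _ ↦ AIle.snd_le I, AIact_snd I hI, AIinl_snd I⟩

/-- for a proper right ideal `I` of a pomonoid `S`, the amalgamated
coproduct `A(I)` is a generator in `Pos`-`S`: `S` is a retract of `A(I)`, i.e.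
there are `S`-poset morphisms `q : S → A(I)` and `f : A(I) → S` with `f ∘ q = id`. -/
theorem AI_is_generator
    {S : Type} [Monoid S] [PartialOrder S]
    [CovariantClass S S (· * ·) (· ≤ ·)]
    [CovariantClass S S (Function.swap (· * ·)) (· ≤ ·)]
    (I : Set S) (hne : I.Nonempty) (hproper : I ≠ Set.univ)
    (hI : ∀ i ∈ I, ∀ s : S, i * s ∈ I) :
    ∃ (q : S → AICarrier S I) (f : AICarrier S I → S),
      (∀ s t : S, s ≤ t → AIle I (q s) (q t)) ∧
      (∀ s t : S, q (s * t) = AIact I hI (q s) t) ∧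
      (∀ p p' : AICarrier S I, AIle I p p' → f p ≤ f p') ∧
      (∀ (p : AICarrier S I) (t : S), f (AIact I hI p t) = f p * t) ∧
      (∀ s : S, f (q s) = s) :=
  AI_is_generator_general I hI
end

section
/- Let S be a pomonoid. Any retract of a right S-poset satisfying Condition (E) satisfies Condition (E). -/
/-- Condition (E) for a right `S`-poset given by raw action data:
`as ≤ at` implies `a = a'u` with `us ≤ ut`. -/
def CondE {S A : Type} [Monoid S] [PartialOrder S] [PartialOrder A]
    (act : A → S → A) : Prop :=
  ∀ (a : A) (s t : S), act a s ≤ act a t →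
    ∃ (a' : A) (u : S), a = act a' u ∧ u * s ≤ u * t

/-- any retract of a right `S`-poset satisfying Condition (E)
satisfies Condition (E). -/
theorem retract_of_condE
    {S A B : Type} [Monoid S] [PartialOrder S] [PartialOrder A] [PartialOrder B]
    [CovariantClass S S (· * ·) (· ≤ ·)]
    [CovariantClass S S (Function.swap (· * ·)) (· ≤ ·)]
    (actA : A → S → A)
    (actA_mul : ∀ (a : A) (s t : S), actA (actA a s) t = actA a (s * t))
    (actA_one : ∀ a : A, actA a 1 = a)
    (actA_monoA : ∀ (s : S) {a b : A}, a ≤ b → actA a s ≤ actA b s)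
    (actA_monoS : ∀ (a : A) {s t : S}, s ≤ t → actA a s ≤ actA a t)
    (actB : B → S → B)
    (actB_mul : ∀ (a : B) (s t : S), actB (actB a s) t = actB a (s * t))
    (actB_one : ∀ a : B, actB a 1 = a)
    (actB_monoA : ∀ (s : S) {a b : B}, a ≤ b → actB a s ≤ actB b s)
    (actB_monoS : ∀ (a : B) {s t : S}, s ≤ t → actB a s ≤ actB a t)
    (g : B → A) (f : A → B)
    (g_mono : ∀ {a b : B}, a ≤ b → g a ≤ g b)
    (g_act : ∀ (a : B) (s : S), g (actB a s) = actA (g a) s)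
    (f_mono : ∀ {a b : A}, a ≤ b → f a ≤ f b)
    (f_act : ∀ (a : A) (s : S), f (actA a s) = actB (f a) s)
    (hfg : ∀ b : B, f (g b) = b)
    (hA : CondE actA) :
    CondE actB := by
  intro b s t h
  obtain ⟨a', u, h1, h2⟩ := hA (g b) s t (by
    rw [← g_act, ← g_act]; exact g_mono h)
  exact ⟨f a', u, by rw [← hfg b, h1, f_act], h2⟩
end

section
/- Let S be a pomonoid. Any retract of an I-regular right S-poset is I-regular. -/
/-- An element `a` of a right `S`-poset is `I`-regular: there is an `S`-poset
morphism `f : aS → S` with `a · f(a) = a`. -/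
def IRegular {S A : Type} [Monoid S] [PartialOrder S] [PartialOrder A]
    (act : A → S → A) (a : A) : Prop :=
  ∃ f : {b : A // ∃ s : S, b = act a s} → S,
    (∀ b c : {b : A // ∃ s : S, b = act a s}, b.1 ≤ c.1 → f b ≤ f c) ∧
    (∀ (b : {b : A // ∃ s : S, b = act a s}) (s : S)
        (h : ∃ u : S, act b.1 s = act a u), f ⟨act b.1 s, h⟩ = f b * s) ∧
    (∀ h : ∃ s : S, a = act a s, act a (f ⟨a, h⟩) = a)

/-- any retract of an `I`-regular right `S`-poset is `I`-regular. -/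
theorem retract_of_I_regular
    {S A B : Type} [Monoid S] [PartialOrder S] [PartialOrder A] [PartialOrder B]
    [CovariantClass S S (· * ·) (· ≤ ·)]
    [CovariantClass S S (Function.swap (· * ·)) (· ≤ ·)]
    (actA : A → S → A)
    (actA_mul : ∀ (a : A) (s t : S), actA (actA a s) t = actA a (s * t))
    (actA_one : ∀ a : A, actA a 1 = a)
    (actA_monoA : ∀ (s : S) {a b : A}, a ≤ b → actA a s ≤ actA b s)
    (actA_monoS : ∀ (a : A) {s t : S}, s ≤ t → actA a s ≤ actA a t)
    (actB : B → S → B)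
    (actB_mul : ∀ (a : B) (s t : S), actB (actB a s) t = actB a (s * t))
    (actB_one : ∀ a : B, actB a 1 = a)
    (actB_monoA : ∀ (s : S) {a b : B}, a ≤ b → actB a s ≤ actB b s)
    (actB_monoS : ∀ (a : B) {s t : S}, s ≤ t → actB a s ≤ actB a t)
    (g : B → A) (f : A → B)
    (g_mono : ∀ {a b : B}, a ≤ b → g a ≤ g b)
    (g_act : ∀ (a : B) (s : S), g (actB a s) = actA (g a) s)
    (f_mono : ∀ {a b : A}, a ≤ b → f a ≤ f b)
    (f_act : ∀ (a : A) (s : S), f (actA a s) = actB (f a) s)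
    (hfg : ∀ b : B, f (g b) = b)
    (hA : ∀ a : A, IRegular actA a) :
    ∀ b : B, IRegular actB b := by
  intro b
  obtain ⟨F, Fmono, Fact, Fid⟩ := hA (g b)
  have hmem : ∀ x : {x : B // ∃ s : S, x = actB b s}, ∃ s : S, g x.1 = actA (g b) s := by
    rintro ⟨x, s, rfl⟩
    exact ⟨s, g_act b s⟩
  refine ⟨fun x => F ⟨g x.1, hmem x⟩, ?_, ?_, ?_⟩
  · intro x y hxy
    exact Fmono _ _ (g_mono hxy)
  · intro x s h
    have key := Fact ⟨g x.1, hmem x⟩ s ⟨(hmem ⟨actB x.1 s, h⟩).choose,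
      by rw [← g_act]; exact (hmem ⟨actB x.1 s, h⟩).choose_spec⟩
    simpa only [Subtype.mk.injEq] using
      (congrArg F (Subtype.ext (g_act x.1 s : g (actB x.1 s) = actA (g x.1) s))).trans key
  · intro h
    set e := F ⟨g b, hmem ⟨b, h⟩⟩ with he
    have h1 : actA (g b) e = g b := by
      have := Fid ⟨1, (actA_one (g b)).symm⟩
      convert this using 3
    calc actB b e = actB (f (g b)) e := by rw [hfg]
      _ = f (actA (g b) e) := (f_act _ _).symm
      _ = f (g b) := by rw [h1]
      _ = b := hfg b
end

section
/- Let S be a pomonoid such that every generator in Pos-S is po-torsion free. Then every right po-cancellable element of S is right invertible. (Proof uses: if s is right po-cancellable but not right invertible, then I = sS is a proper right ideal, the amalgamated coproduct A(I) is a generator, (x,1)s ≤ (y,1)s in A(I), but (x,1) ≤ (y,1) would force 1 ≤ st ≤ 1 for some t, a contradiction.) -/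
/-- A right `S`-poset: a poset with a compatible monotone right `S`-action. -/
structure SPoset (S : Type) [Monoid S] [PartialOrder S] where
  carrier : Type
  le : carrier → carrier → Prop
  le_refl : ∀ a, le a a
  le_trans : ∀ a b c, le a b → le b c → le a c
  le_antisymm : ∀ a b, le a b → le b a → a = b
  act : carrier → S → carrier
  act_one : ∀ a, act a 1 = a
  act_mul : ∀ a s t, act (act a s) t = act a (s * t)
  act_mono_left : ∀ a b s, le a b → le (act a s) (act b s)
  act_mono_right : ∀ a s t, s ≤ t → le (act a s) (act a t)

/-- A morphism of right `S`-posets: a monotone action-preserving map. -/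
structure SPosetHom {S : Type} [Monoid S] [PartialOrder S] (A B : SPoset S) where
  toFun : A.carrier → B.carrier
  mono : ∀ a b, A.le a b → B.le (toFun a) (toFun b)
  map_act : ∀ a s, toFun (A.act a s) = B.act (toFun a) s

/-- `G` is a generator in `Pos`-`S`: the functor `Pos_S(G, −)` is faithful. -/
def IsGenerator {S : Type} [Monoid S] [PartialOrder S] (G : SPoset S) : Prop :=
  ∀ (X Y : SPoset S) (f g : SPosetHom X Y), f.toFun ≠ g.toFun →
    ∃ h : SPosetHom G X, f.toFun ∘ h.toFun ≠ g.toFun ∘ h.toFun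

/-- A right `S`-poset is po-torsion free: `ac ≤ a'c` with `c` right
po-cancellable implies `a ≤ a'`. -/
def PoTorsionFree {S : Type} [Monoid S] [PartialOrder S] (A : SPoset S) : Prop :=
  ∀ (a a' : A.carrier) (c : S), (∀ s s' : S, s * c ≤ s' * c → s ≤ s') →
    A.le (A.act a c) (A.act a' c) → A.le a a'

section Aux
set_option linter.unusedSectionVars false
attribute [local instance] Classical.propDecidable

variable {S : Type} [Monoid S] [PartialOrder S]
  [CovariantClass S S (· * ·) (· ≤ ·)]
  [CovariantClass S S (Function.swap (· * ·)) (· ≤ ·)]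

def Ic (c : S) : Set S := {u | ∃ t, u = c * t}

lemma Ic_mul {c u : S} (hu : u ∈ Ic c) (s : S) : u * s ∈ Ic c := by
  obtain ⟨t, rfl⟩ := hu
  exact ⟨t * s, mul_assoc c t s⟩

noncomputable def AP (c : S) : SPoset S where
  carrier := {p : Fin 3 × S // p.1 = 2 ↔ p.2 ∈ Ic c}
  le p q := (p.1.1 = q.1.1 ∧ p.1.2 ≤ q.1.2) ∨
    (p.1.1 ≠ q.1.1 ∧ ∃ i ∈ Ic c, p.1.2 ≤ i ∧ i ≤ q.1.2)
  le_refl p := Or.inl ⟨rfl, le_refl _⟩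
  le_trans p q r hpq hqr := by
    rcases hpq with ⟨e1, h1⟩ | ⟨n1, i, hi, hsi, hit⟩
    · rcases hqr with ⟨e2, h2⟩ | ⟨n2, j, hj, hsj, hjt⟩
      · exact Or.inl ⟨e1.trans e2, h1.trans h2⟩
      · exact Or.inr ⟨e1 ▸ n2, j, hj, h1.trans hsj, hjt⟩
    · rcases hqr with ⟨e2, h2⟩ | ⟨n2, j, hj, hsj, hjt⟩
      · exact Or.inr ⟨fun e => n1 (e.trans e2.symm), i, hi, hsi, hit.trans h2⟩
      · by_cases e : p.1.1 = r.1.1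
        · exact Or.inl ⟨e, hsi.trans (hit.trans (hsj.trans hjt))⟩
        · exact Or.inr ⟨e, i, hi, hsi, hit.trans (hsj.trans hjt)⟩
  le_antisymm p q hpq hqp := by
    rcases hpq with ⟨e1, h1⟩ | ⟨n1, i, hi, hsi, hit⟩
    · rcases hqp with ⟨e2, h2⟩ | ⟨n2, j, hj, hsj, hjt⟩
      · exact Subtype.ext (Prod.ext e1 (le_antisymm h1 h2))
      · exact absurd e1.symm n2
    · rcases hqp with ⟨e2, h2⟩ | ⟨n2, j, hj, hsj, hjt⟩
      · exact absurd e2.symm n1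
      · exfalso
        have hip : i = p.1.2 := le_antisymm (hit.trans (hsj.trans hjt)) hsi
        have hpI : p.1.2 ∈ Ic c := hip ▸ hi
        have hqI : q.1.2 ∈ Ic c := by
          have hst : p.1.2 = q.1.2 :=
            le_antisymm (hsi.trans hit) (hsj.trans hjt)
          exact hst ▸ hpI
        exact n1 ((p.2.mpr hpI).trans (q.2.mpr hqI).symm)
  act p s := ⟨(if p.1.2 * s ∈ Ic c then 2 else p.1.1, p.1.2 * s), by
    by_cases h : p.1.2 * s ∈ Ic c
    · simp [h]
    · simp only [if_neg h, h, iff_false]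
      intro h2
      exact h (Ic_mul (p.2.mp h2) s)⟩
  act_one p := by
    apply Subtype.ext
    show (if p.1.2 * 1 ∈ Ic c then (2 : Fin 3) else p.1.1, p.1.2 * 1) = p.1
    by_cases h : p.1.2 * 1 ∈ Ic c
    · have hl : p.1.1 = 2 := p.2.mpr (by rwa [mul_one] at h)
      have he : (p : Fin 3 × S) = ((p:Fin 3 × S).1, (p:Fin 3 × S).2) := rfl
      rw [if_pos h, mul_one, he, hl]
    · rw [if_neg h, mul_one]
  act_mul p s t := by
    apply Subtype.ext
    show (if p.1.2 * s * t ∈ Ic c then (2:Fin 3) else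
        (if p.1.2 * s ∈ Ic c then (2:Fin 3) else p.1.1), p.1.2 * s * t)
      = (if p.1.2 * (s * t) ∈ Ic c then (2:Fin 3) else p.1.1, p.1.2 * (s * t))
    by_cases h : p.1.2 * s ∈ Ic c
    · have h2 : p.1.2 * s * t ∈ Ic c := Ic_mul h t
      have h3 : p.1.2 * (s * t) ∈ Ic c := by rwa [← mul_assoc]
      rw [if_pos h2, if_pos h3, mul_assoc]
    · rw [if_neg h, mul_assoc]
  act_mono_left p q s h := by
    have key : p.1.2 * s ≤ q.1.2 * s ∧
        ((p.1.1 = q.1.1 ∧ p.1.2 ≤ q.1.2) ∨ ∃ i ∈ Ic c, p.1.2 * s ≤ i * s ∧ i * s ≤ q.1.2 * s) := by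
      rcases h with ⟨e, hle⟩ | ⟨n, i, hi, hl1, hl2⟩
      · exact ⟨mul_le_mul_left hle s, Or.inl ⟨e, hle⟩⟩
      · exact ⟨(mul_le_mul_left hl1 s).trans (mul_le_mul_left hl2 s),
          Or.inr ⟨i, hi, mul_le_mul_left hl1 s, mul_le_mul_left hl2 s⟩⟩
    by_cases hp : p.1.2 * s ∈ Ic c <;> by_cases hq : q.1.2 * s ∈ Ic c
    · exact Or.inl ⟨by simp [hp, hq], key.1⟩
    · have hqn : q.1.1 ≠ 2 := fun e => hq (Ic_mul (q.2.mp e) s)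
      refine Or.inr ⟨by simp [hp, hq]; exact fun e => hqn e.symm, p.1.2 * s, hp, le_refl _, key.1⟩
    · have hpn : p.1.1 ≠ 2 := fun e => hp (Ic_mul (p.2.mp e) s)
      refine Or.inr ⟨by simp [hp, hq]; exact hpn, q.1.2 * s, hq, key.1, le_refl _⟩
    · rcases key.2 with ⟨e, hle⟩ | ⟨i, hi, hl1, hl2⟩
      · exact Or.inl ⟨by simp [hp, hq, e], key.1⟩
      · by_cases e : p.1.1 = q.1.1
        · exact Or.inl ⟨by simp [hp, hq, e], key.1⟩
        · exact Or.inr ⟨by simp [hp, hq]; exact e, i * s, Ic_mul hi s, hl1, hl2⟩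
  act_mono_right p s t h := by
    have key : p.1.2 * s ≤ p.1.2 * t := mul_le_mul_right h _
    by_cases hp : p.1.2 * s ∈ Ic c <;> by_cases hq : p.1.2 * t ∈ Ic c
    · exact Or.inl ⟨by simp [hp, hq], key⟩
    · have hpn : p.1.1 ≠ 2 := fun e => hq (Ic_mul (p.2.mp e) t)
      refine Or.inr ⟨by simp [hp, hq]; exact fun e => hpn e.symm, p.1.2 * s, hp, le_refl _, key⟩
    · have hpn : p.1.1 ≠ 2 := fun e => hp (Ic_mul (p.2.mp e) s)
      refine Or.inr ⟨by simp [hp, hq]; exact hpn, p.1.2 * t, hq, key, le_refl _⟩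
    · exact Or.inl ⟨by simp [hp, hq], key⟩

/-- The point `(l, 1)` of `A(I)` for a non-`z` label `l`. -/
noncomputable def pt (c : S) (l : Fin 3) (hl : l ≠ 2) (h1 : (1:S) ∉ Ic c) :
    (AP c).carrier := ⟨(l, 1), iff_of_false hl h1⟩

lemma AP_act_in {c : S} (p : (AP c).carrier) (s : S) (h : p.1.2 * s ∈ Ic c) :
    (AP c).act p s = ⟨(2, p.1.2 * s), iff_of_true rfl h⟩ := by
  apply Subtype.ext
  show (if p.1.2 * s ∈ Ic c then (2:Fin 3) else p.1.1, p.1.2 * s) = (2, p.1.2 * s)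
  rw [if_pos h]

lemma AP_generator {c : S} (h1 : (1:S) ∉ Ic c) : IsGenerator (AP c) := by
  intro X Y f g hne
  have hex : ∃ a, f.toFun a ≠ g.toFun a := by
    by_contra h
    push_neg at h
    exact hne (funext h)
  obtain ⟨a, ha⟩ := hex
  refine ⟨⟨fun p => X.act a p.1.2, ?_, ?_⟩, ?_⟩
  · rintro p q (⟨_, hle⟩ | ⟨_, i, _, hle1, hle2⟩)
    · exact X.act_mono_right a _ _ hle
    · exact X.le_trans _ _ _ (X.act_mono_right a _ _ hle1) (X.act_mono_right a _ _ hle2)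
  · intro p s
    exact (X.act_mul a p.1.2 s).symm
  · intro hEq
    have h2 := congrFun hEq (pt c 0 (by decide) h1)
    simp only [Function.comp_apply] at h2
    have h3 : f.toFun (X.act a 1) = g.toFun (X.act a 1) := h2
    rw [X.act_one a] at h3
    exact ha h3
end Aux

/-- if every generator in `Pos`-`S` is po-torsion free, then
every right po-cancellable element of `S` is right invertible. -/
theorem right_po_cancellable_right_invertible
    {S : Type} [Monoid S] [PartialOrder S]
    [CovariantClass S S (· * ·) (· ≤ ·)]
    [CovariantClass S S (Function.swap (· * ·)) (· ≤ ·)]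
    (hgen : ∀ G : SPoset S, IsGenerator G → PoTorsionFree G) :
    ∀ c : S, (∀ s s' : S, s * c ≤ s' * c → s ≤ s') → ∃ t : S, c * t = 1 := by

  intro c hc
  by_contra hno
  push_neg at hno
  have h1 : (1:S) ∉ Ic c := fun ⟨t, ht⟩ => hno t ht.symm
  have hg := hgen (AP c) (AP_generator h1)
  have hcI : (1:S) * c ∈ Ic c := ⟨1, by rw [one_mul, mul_one]⟩
  have hle : (AP c).le (pt c 0 (by decide) h1) (pt c 1 (by decide) h1) := by
    apply hg _ _ c hc
    have heq : (AP c).act (pt c 0 (by decide) h1) c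
        = (AP c).act (pt c 1 (by decide) h1) c :=
      (AP_act_in (pt c 0 (by decide) h1) c hcI).trans
        (AP_act_in (pt c 1 (by decide) h1) c hcI).symm
    rw [heq]
    exact (AP c).le_refl _
  rcases hle with ⟨e, _⟩ | ⟨_, i, hi, hi1, hi2⟩
  · have e' : (0 : Fin 3) = 1 := e
    exact absurd e' (by decide)
  · have hieq : i = 1 := le_antisymm hi2 hi1
    exact h1 (hieq ▸ hi)
end
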